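/- arXiv:math/0607570 — 2 statements merged into one kernel-verified Lean document; each statement's English description precedes it below -/
import Mathlib

section
/- Let R = (T^0, …, T^{2m-1}) be a symmetric cycle of {-,+}-sign vectors on E_m (consecutive vectors differ in exactly one coordinate and T^{k+m} = -T^k). Let M := max⁺(V(R)) be the set of those T^k whose positive part is inclusion-maximal in {(T^j)⁺ : j}. Then for every e ∈ E_m, |{T ∈ M : T(e) = +}| = ⌈|M|/2⌉. -/
/-!
Let `ε k` be the coordinate flipped between `T k` and `T (k + 1)`, and call step `k` rising when
it makes `ε k` positive. Since `T (k + m) = -T k`, every coordinate flips exactly once in any `m`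
consecutive steps. Hence `T (k + 1)` is in `max⁺` exactly when step `k` rises and step `k + 1`
falls (a peak), and distinct peaks in one period give distinct vectors.

Pick a rising step `p` flipping `e`. The maximal vectors positive at `e` are the peaks in
`[p, p + m)`, the others are the peaks in `[p + m, p + 2m)`, which by antipodality correspond to
the valleys in `[p, p + m)`. The step signs rise at `p` and fall at `p + m`, so `[p, p + m)` holds
one more peak than valleys, and `|M| = 2D - 1` where `D` is the number of maximal vectors positive
at `e`.
-/

/-- Sign vectors with no zero components on `Fin m`, encoded as Boolean vectors
(`true` is `+`, `false` is `-`). -/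
abbrev SV (m : ℕ) := Fin m → Bool

/-- The positive part of a sign vector. -/
def posPart {m : ℕ} (X : SV m) : Finset (Fin m) :=
  Finset.univ.filter (fun e => X e = true)

/-- The separation set of two sign vectors (no zero components). -/
def sep {m : ℕ} (X Y : SV m) : Finset (Fin m) :=
  Finset.univ.filter (fun e => X e ≠ Y e)

/-- A finite set of sign vectors is a committee if for every coordinate `e`,
strictly more than half of its elements have a `+` at `e`. -/
def isCommitteeB {m : ℕ} (K : Finset (SV m)) : Prop :=
  ∀ e : Fin m, (K.card : ℚ) / 2 < ((K.filter (fun X => X e = true)).card : ℚ)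

/-- The elements of a family whose positive parts are inclusion-maximal. -/
def maxPlus {m : ℕ} (V : Finset (SV m)) : Finset (SV m) :=
  V.filter (fun X => ∀ Y ∈ V, ¬ _root_.posPart X ⊂ _root_.posPart Y)

open Finset

def descents (d : ℕ → Bool) (s : Finset ℕ) : Finset ℕ :=
  s.filter fun k => d k = true ∧ d (k + 1) = false

def ascents (d : ℕ → Bool) (s : Finset ℕ) : Finset ℕ :=
  s.filter fun k => d k = false ∧ d (k + 1) = true

theorem card_descents_Ico_add_toNat (d : ℕ → Bool) (a n : ℕ) :
    #(descents d (Ico a (a + n))) + (d (a + n)).toNat =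
      #(ascents d (Ico a (a + n))) + (d a).toNat := by
  induction n with
  | zero => simp [descents, ascents]
  | succ n ih =>
    rw [descents, ascents] at ih ⊢
    rw [← add_assoc, Nat.Ico_succ_right_eq_insert_Ico (Nat.le_add_right a n), filter_insert,
      filter_insert]
    cases h : d (a + n) <;> cases h' : d (a + n + 1) <;> simp_all [add_right_comm]

theorem card_descents_Ico_add_eq_card_ascents {d : ℕ → Bool} {m : ℕ}
    (hd : ∀ k, d (k + m) = !d k) (a b : ℕ) :
    #(descents d (Ico (a + m) (b + m))) = #(ascents d (Ico a b)) := by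
  rw [← map_add_right_Ico, descents, filter_map, card_map, ascents]
  congr 1
  refine filter_congr fun k _ => ?_
  simp [hd, add_right_comm k m 1]

@[simp]
theorem mem_posPart {m : ℕ} {X : SV m} {x : Fin m} : x ∈ _root_.posPart X ↔ X x = true := by
  simp [_root_.posPart]

theorem posPart_ssubset_of_forall_ne {m : ℕ} {X Y : SV m} {x : Fin m}
    (h : ∀ y, y ≠ x → X y = Y y) (hX : X x = false) (hY : Y x = true) :
    _root_.posPart X ⊂ _root_.posPart Y := by
  refine Finset.ssubset_iff_subset_ne.2 ⟨fun y hy => ?_, fun hXY => ?_⟩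
  · rw [mem_posPart] at hy ⊢
    rwa [← h y (by rintro rfl; simp_all)]
  · simpa [hX, hY] using congrArg (x ∈ ·) hXY

def stepSign {m : ℕ} (T : ℕ → SV m) (ε : ℕ → Fin m) (k : ℕ) : Bool :=
  T (k + 1) (ε k)

structure IsSymmetricCycle {m : ℕ} (T : ℕ → SV m) (ε : ℕ → Fin m) : Prop where
  antipodal : ∀ k x, T (k + m) x = !T k x
  ne_succ_iff : ∀ k x, T k x ≠ T (k + 1) x ↔ x = ε k

namespace IsSymmetricCycle

variable {m : ℕ} {T : ℕ → SV m} {ε : ℕ → Fin m}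

theorem succ_apply_of_ne (hC : IsSymmetricCycle T ε) {k : ℕ} {x : Fin m} (hx : x ≠ ε k) :
    T (k + 1) x = T k x :=
  not_not.1 fun h => hx ((hC.ne_succ_iff k x).1 (Ne.symm h))

theorem apply_flip (hC : IsSymmetricCycle T ε) (k : ℕ) : T k (ε k) = !stepSign T ε k :=
  Bool.eq_not.2 ((hC.ne_succ_iff k (ε k)).2 rfl)

theorem periodic (hC : IsSymmetricCycle T ε) : Function.Periodic T (2 * m) := fun k => by
  ext x
  rw [two_mul, ← add_assoc, hC.antipodal, hC.antipodal, Bool.not_not]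

theorem flip_add (hC : IsSymmetricCycle T ε) (k : ℕ) : ε (k + m) = ε k := by
  refine ((hC.ne_succ_iff (k + m) (ε k)).1 ?_).symm
  rw [add_right_comm, hC.antipodal, hC.antipodal]
  simpa using (hC.ne_succ_iff k (ε k)).2 rfl

theorem stepSign_add (hC : IsSymmetricCycle T ε) (k : ℕ) :
    stepSign T ε (k + m) = !stepSign T ε k := by
  rw [stepSign, stepSign, hC.flip_add, add_right_comm, hC.antipodal]

theorem exists_add_lt_eq (hC : IsSymmetricCycle T ε) (a j : ℕ) :
    ∃ t < 2 * m, T (a + t) = T j := by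
  have h2m : 0 < 2 * m := by have := (ε 0).pos; omega
  -- `a + t` differs from `j + a * (2 * m)` by a multiple of the period
  refine ⟨(j + a * (2 * m) - a) % (2 * m), Nat.mod_lt _ h2m, ?_⟩
  rw [← hC.periodic.nat_mul ((j + a * (2 * m) - a) / (2 * m)), ← hC.periodic.nat_mul a j]
  congr 1
  have := Nat.mod_add_div' (j + a * (2 * m) - a) (2 * m)
  have : a ≤ a * (2 * m) := Nat.le_mul_of_pos_right a h2m
  push_cast
  omega

theorem apply_add_of_forall_ne (hC : IsSymmetricCycle T ε) {x : Fin m} {a n : ℕ}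
    (h : ∀ l ∈ Ico a (a + n), ε l ≠ x) : T (a + n) x = T a x := by
  induction n with
  | zero => rfl
  | succ n ih =>
    rw [← add_assoc, hC.succ_apply_of_ne (h _ (by simp)).symm,
      ih fun l hl => h l (Ico_subset_Ico_right (by omega) hl)]

theorem exists_flip_eq (hC : IsSymmetricCycle T ε) (a : ℕ) (x : Fin m) :
    ∃ l ∈ Ico a (a + m), ε l = x := by
  by_contra! h
  -- otherwise `x` keeps its sign for `m` steps, although `T (a + m) x = !T a x`
  simpa [hC.antipodal] using hC.apply_add_of_forall_ne h

theorem flip_injOn (hC : IsSymmetricCycle T ε) (a : ℕ) : Set.InjOn ε (Ico a (a + m)) := by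
  intro i hi l hl
  exact inj_on_of_surj_on_of_card_le (fun l _ => ε l) (fun _ _ => mem_univ _)
    (fun x _ => by simpa [eq_comm] using hC.exists_flip_eq a x) (by simp) hi hl

theorem apply_add_of_lt (hC : IsSymmetricCycle T ε) {a t : ℕ} (ht : t < m) :
    T (a + 1 + t) (ε a) = stepSign T ε a := by
  refine (hC.apply_add_of_forall_ne fun l hl h => ?_).trans rfl
  simp only [mem_Ico] at hl
  have := hC.flip_injOn a (by simp only [coe_Ico, Set.mem_Ico]; omega)
    (by simp only [coe_Ico, Set.mem_Ico]; omega) h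
  omega

theorem posPart_ssubset_succ (hC : IsSymmetricCycle T ε) {k : ℕ} (h : stepSign T ε k = true) :
    _root_.posPart (T k) ⊂ _root_.posPart (T (k + 1)) :=
  posPart_ssubset_of_forall_ne (fun _ hy => (hC.succ_apply_of_ne hy).symm)
    (by rw [hC.apply_flip, h]; rfl) h

theorem posPart_succ_ssubset (hC : IsSymmetricCycle T ε) {k : ℕ} (h : stepSign T ε k = false) :
    _root_.posPart (T (k + 1)) ⊂ _root_.posPart (T k) :=
  posPart_ssubset_of_forall_ne (fun _ hy => hC.succ_apply_of_ne hy) h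
    (by rw [hC.apply_flip, h]; rfl)

theorem eq_zero_of_posPart_subset (hC : IsSymmetricCycle T ε) {k t : ℕ}
    (hk : stepSign T ε k = true) (hk' : stepSign T ε (k + 1) = false) (ht : t < 2 * m)
    (hsub : _root_.posPart (T (k + 1)) ⊆ _root_.posPart (T (k + 1 + t))) : t = 0 := by
  by_contra ht0
  rcases Nat.lt_or_ge m t with hmt | htm
  · have hx : ε (k + m) ∈ _root_.posPart (T (k + 1)) := by
      rw [mem_posPart, hC.flip_add]; exact hk
    have := hC.apply_add_of_lt (a := k + m) (show t - m < m by omega)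
    rw [show k + m + 1 + (t - m) = k + 1 + t by omega, hC.stepSign_add, hk] at this
    simpa [this] using hsub hx
  · have hx : ε (k + 1) ∈ _root_.posPart (T (k + 1)) := by
      rw [mem_posPart, hC.apply_flip, hk']; rfl
    have := hC.apply_add_of_lt (a := k + 1) (show t - 1 < m by omega)
    rw [show k + 1 + 1 + (t - 1) = k + 1 + t by omega, hk'] at this
    simpa [this] using hsub hx

theorem forall_not_posPart_ssubset_iff (hC : IsSymmetricCycle T ε) (k : ℕ) :
    (∀ j, ¬ _root_.posPart (T (k + 1)) ⊂ _root_.posPart (T j)) ↔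
      stepSign T ε k = true ∧ stepSign T ε (k + 1) = false := by
  refine ⟨fun h => ⟨?_, ?_⟩, fun ⟨hk, hk'⟩ j hj => ?_⟩
  · by_contra hk
    exact h k (hC.posPart_succ_ssubset (Bool.eq_false_iff.2 hk))
  · by_contra hk'
    exact h (k + 2) (hC.posPart_ssubset_succ (Bool.not_eq_false _ ▸ hk'))
  · obtain ⟨t, ht, hTt⟩ := hC.exists_add_lt_eq (k + 1) j
    rw [← hTt] at hj
    obtain rfl := hC.eq_zero_of_posPart_subset hk hk' ht hj.subset
    exact hj.ne rfl

theorem mem_maxPlus_iff (hC : IsSymmetricCycle T ε) (X : SV m) :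
    X ∈ maxPlus ((range (2 * m)).image T) ↔
      (∃ j, T j = X) ∧ ∀ j, ¬ _root_.posPart X ⊂ _root_.posPart (T j) := by
  have h2m : 0 < 2 * m := by have := (ε 0).pos; omega
  have hV : ∀ Y, Y ∈ (range (2 * m)).image T ↔ ∃ j, T j = Y := fun Y =>
    ⟨fun hY => (mem_image.1 hY).imp fun _ => And.right,
      fun ⟨j, hj⟩ => mem_image.2 ⟨j % (2 * m), mem_range.2 (Nat.mod_lt _ h2m),
        (hC.periodic.map_mod_nat j).trans hj⟩⟩
  simp only [maxPlus, mem_filter, hV]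
  exact and_congr_right fun _ =>
    ⟨fun h j => h _ ⟨j, rfl⟩, fun h _ ⟨j, hj⟩ => hj ▸ h j⟩

theorem maxPlus_eq_image (hC : IsSymmetricCycle T ε) (p : ℕ) :
    maxPlus ((range (2 * m)).image T) =
      (descents (stepSign T ε) (Ico p (p + 2 * m))).image fun k => T (k + 1) := by
  ext X
  simp only [hC.mem_maxPlus_iff, mem_image, descents, mem_filter, mem_Ico]
  constructor
  · rintro ⟨⟨j, rfl⟩, hmax⟩
    obtain ⟨t, ht, hTt⟩ := hC.exists_add_lt_eq (p + 1) j
    rw [add_right_comm] at hTt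
    refine ⟨p + t, ⟨⟨by omega, by omega⟩, (hC.forall_not_posPart_ssubset_iff _).1 ?_⟩,
      hTt⟩
    rwa [hTt]
  · rintro ⟨k, ⟨-, hk⟩, rfl⟩
    exact ⟨⟨k + 1, rfl⟩, (hC.forall_not_posPart_ssubset_iff k).2 hk⟩

theorem injOn_descents (hC : IsSymmetricCycle T ε) (p : ℕ) :
    Set.InjOn (fun k => T (k + 1)) (descents (stepSign T ε) (Ico p (p + 2 * m))) := by
  have key : ∀ k ∈ descents (stepSign T ε) (Ico p (p + 2 * m)),
      ∀ l ∈ descents (stepSign T ε) (Ico p (p + 2 * m)),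
        k ≤ l → T (k + 1) = T (l + 1) → k = l := by
    intro k hk l hl hkl hT
    simp only [descents, mem_filter, mem_Ico] at hk hl
    have := hC.eq_zero_of_posPart_subset (t := l - k) hk.2.1 hk.2.2 (by omega)
      (by rw [show k + 1 + (l - k) = l + 1 by omega, hT])
    omega
  intro k hk l hl hT
  rcases le_total k l with hkl | hlk
  · exact key k hk l hl hkl hT
  · exact (key l hl k hk hlk hT.symm).symm

theorem exists_flip_eq_and_stepSign_eq_true (hC : IsSymmetricCycle T ε) (x : Fin m) :
    ∃ p, ε p = x ∧ stepSign T ε p = true := by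
  obtain ⟨l, -, rfl⟩ := hC.exists_flip_eq 0 x
  cases h : stepSign T ε l
  · exact ⟨l + m, hC.flip_add l, by rw [hC.stepSign_add, h]; rfl⟩
  · exact ⟨l, rfl, h⟩

theorem filter_maxPlus_eq_image (hC : IsSymmetricCycle T ε) {p : ℕ}
    (hp : stepSign T ε p = true) :
    (maxPlus ((range (2 * m)).image T)).filter (fun X => X (ε p) = true) =
      (descents (stepSign T ε) (Ico p (p + m))).image fun k => T (k + 1) := by
  rw [hC.maxPlus_eq_image p, filter_image]
  congr 1
  ext k
  simp only [descents, mem_filter, mem_Ico]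
  constructor
  · rintro ⟨⟨⟨hpk, hk2m⟩, hk⟩, hke⟩
    refine ⟨⟨hpk, ?_⟩, hk⟩
    by_contra! hkm
    have := hC.apply_add_of_lt (a := p + m) (show k - p - m < m by omega)
    rw [show p + m + 1 + (k - p - m) = k + 1 by omega, hC.flip_add, hC.stepSign_add, hp,
      hke] at this
    exact absurd this (by decide)
  · rintro ⟨⟨hpk, hkm⟩, hk⟩
    refine ⟨⟨⟨hpk, by omega⟩, hk⟩, ?_⟩
    have := hC.apply_add_of_lt (a := p) (show k - p < m by omega)
    rwa [show p + 1 + (k - p) = k + 1 by omega, hp] at this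

theorem card_maxPlus (hC : IsSymmetricCycle T ε) (p : ℕ) :
    #(maxPlus ((range (2 * m)).image T)) =
      #(descents (stepSign T ε) (Ico p (p + m))) +
        #(descents (stepSign T ε) (Ico (p + m) (p + 2 * m))) := by
  rw [hC.maxPlus_eq_image p, card_image_of_injOn (hC.injOn_descents p), descents, descents,
    descents,
    ← card_union_of_disjoint (disjoint_filter_filter (Ico_disjoint_Ico_consecutive _ _ _)),
    ← filter_union, Ico_union_Ico_eq_Ico (by omega) (by omega)]

theorem card_filter_maxPlus (hC : IsSymmetricCycle T ε) (e : Fin m) :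
    #((maxPlus ((range (2 * m)).image T)).filter (fun X => X e = true)) =
      (#(maxPlus ((range (2 * m)).image T)) + 1) / 2 := by
  obtain ⟨p, rfl, hp⟩ := hC.exists_flip_eq_and_stepSign_eq_true e
  have hinj := (hC.injOn_descents p).mono (s₁ := descents (stepSign T ε) (Ico p (p + m)))
    (coe_subset.2 (filter_subset_filter _ (Ico_subset_Ico_right (by omega))))
  have hpm : stepSign T ε (p + m) = false := by rw [hC.stepSign_add, hp]; rfl
  have hbalance := card_descents_Ico_add_toNat (stepSign T ε) p m
  have hanti := card_descents_Ico_add_eq_card_ascents hC.stepSign_add p (p + m)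
  rw [hp, hpm] at hbalance
  rw [hC.filter_maxPlus_eq_image hp, card_image_of_injOn hinj, hC.card_maxPlus p, two_mul,
    ← add_assoc, hanti]
  simp only [Bool.toNat_false, add_zero, Bool.toNat_true] at hbalance
  omega

end IsSymmetricCycle

theorem isSymmetricCycle_of_sep {m : ℕ} {T : ℕ → SV m} {ε : ℕ → Fin m}
    (hsym : ∀ k, T (k + m) = fun e => !T k e) (hε : ∀ k, sep (T k) (T (k + 1)) = {ε k}) :
    IsSymmetricCycle T ε where
  antipodal k x := congrFun (hsym k) x
  ne_succ_iff k x := by simpa [sep] using Finset.ext_iff.1 (hε k) x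

theorem stmt_7_general {m : ℕ} (T : ℕ → SV m)
    (hsym : ∀ k, T (k + m) = fun e => ! T k e)
    (hstep : ∀ k, (sep (T k) (T (k + 1))).card = 1) :
    ∀ e : Fin m,
      ((maxPlus ((Finset.range (2 * m)).image T)).filter
          (fun X => X e = true)).card =
        ((maxPlus ((Finset.range (2 * m)).image T)).card + 1) / 2 := by
  choose ε hε using fun k => Finset.card_eq_one.1 (hstep k)
  exact (isSymmetricCycle_of_sep hsym hε).card_filter_maxPlus

theorem stmt_7 {m : ℕ} (hm : 0 < m) (T : ℕ → SV m)
    (hsym : ∀ k, T (k + m) = fun e => ! T k e)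
    (hstep : ∀ k, (sep (T k) (T (k + 1))).card = 1) :
    ∀ e : Fin m,
      ((maxPlus ((Finset.range (2 * m)).image T)).filter
          (fun X => X e = true)).card =
        ((maxPlus ((Finset.range (2 * m)).image T)).card + 1) / 2 :=
  stmt_7_general T hsym hstep
end

section
/- Let R = (T^0, …, T^{2m-1}) be a symmetric cycle of {-,+}-sign vectors on E_m not containing the all-plus vector, and let M := max⁺(V(R)). Then no proper subset of M is a committee; that is, M is a minimal committee. -/
/-!
Along a symmetric cycle every step flips one coordinate, and since `T (k + m) = -T k` each
coordinate flips exactly once in any `m` consecutive steps. The members of max⁺ are the peaks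
`T (k + 1)`, where an up step `k` is followed by a down step. As step `k + m` goes opposite to
step `k`, a half period starting at an up step contains exactly one peak more than the next
half period.

Read off at the up step of a coordinate `e`, this gives `∑_{X ∈ M} ±X(e) = 1`: `M` is a
committee with margin one everywhere. Read off at a peak `X`, with the coordinate dropped right
after each peak `Y`, it gives `∑_Y ±X(drop Y) = 1 > 0`. Summing over a nonempty `D ⊆ M` yields
a coordinate where `D` has positive margin, so `M \ D` has margin at most zero there.
-/

open Finset Function

theorem Function.Periodic.sum_range_add {M : Type*} [AddCommGroup M] {F : ℕ → M} {n : ℕ}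
    (hF : Periodic F n) (l : ℕ) : ∑ i ∈ range n, F (l + i) = ∑ i ∈ range n, F i := by
  induction l with
  | zero => simp
  | succ l ih =>
    have h := (sum_range_succ' (fun i => F (l + i)) n).symm.trans
      (sum_range_succ (fun i => F (l + i)) n)
    simp only [add_zero, hF l, add_left_inj] at h
    simpa only [← ih, add_right_comm l 1, add_assoc] using h

section

variable {m : ℕ}

theorem posPart_ssubset_posPart {X Y : SV m} (hXY : ∀ e, X e = true → Y e = true) {e : Fin m}
    (hX : X e = false) (hY : Y e = true) : _root_.posPart X ⊂ _root_.posPart Y := by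
  refine (ssubset_iff_of_subset fun f hf => ?_).2 ⟨e, ?_, ?_⟩ <;>
    simp_all [_root_.posPart]

def signVal (X : SV m) (e : Fin m) : ℤ := if X e then 1 else -1

theorem sum_signVal (K : Finset (SV m)) (e : Fin m) :
    ∑ X ∈ K, signVal X e = 2 * #(K.filter (fun X => X e = true)) - #K := by
  rw [← card_filter_add_card_filter_not (s := K) (fun X => X e = true)]
  simp only [signVal, sum_ite, sum_const, Int.nsmul_eq_mul, mul_one, Bool.not_eq_true,
    Nat.cast_add]
  ring

theorem isCommitteeB_iff_forall_sum_signVal_pos {K : Finset (SV m)} :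
    isCommitteeB K ↔ ∀ e, 0 < ∑ X ∈ K, signVal X e := by
  refine forall_congr' fun e => ?_
  rw [sum_signVal, div_lt_iff₀ two_pos, sub_pos, ← Int.cast_lt (R := ℚ)]
  push_cast
  rw [mul_comm]

theorem not_isCommitteeB_of_ssubset {K Q : Finset (SV m)}
    (hK : ∀ e, ∑ X ∈ K, signVal X e ≤ 1) {ι : Type*} (s : Finset ι) (a : ι → Fin m)
    (ha : ∀ X ∈ K, 0 < ∑ j ∈ s, signVal X (a j)) (hQ : Q ⊂ K) : ¬ isCommitteeB Q := by
  obtain ⟨X, hXK, hXQ⟩ := exists_of_ssubset hQ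
  have hpos : ∑ j ∈ s, (0 : ℤ) < ∑ j ∈ s, ∑ Y ∈ K \ Q, signVal Y (a j) := by
    rw [sum_const_zero, sum_comm]
    exact sum_pos (fun Y hY => ha Y (mem_sdiff.1 hY).1) ⟨X, mem_sdiff.2 ⟨hXK, hXQ⟩⟩
  obtain ⟨j, -, hj⟩ := exists_lt_of_sum_lt hpos
  rw [isCommitteeB_iff_forall_sum_signVal_pos]
  intro hQc
  have hsplit := sum_sdiff hQ.subset (f := fun Y => signVal Y (a j))
  linarith [hQc (a j), hK (a j)]

structure IsSymmCycle (T : ℕ → SV m) : Prop where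
  neg_add : ∀ k, T (k + m) = fun e => !T k e
  card_sep : ∀ k, #(sep (T k) (T (k + 1))) = 1

namespace IsSymmCycle

noncomputable section

variable {T : ℕ → SV m}

theorem periodic (hT : IsSymmCycle T) : Periodic T (2 * m) := fun k => by
  rw [two_mul, ← add_assoc, hT.neg_add, hT.neg_add]
  simp

theorem apply_add (hT : IsSymmCycle T) (k : ℕ) (e : Fin m) : T (k + m) e = !T k e := by
  rw [hT.neg_add]

def flip (hT : IsSymmCycle T) (k : ℕ) : Fin m :=
  (card_eq_one.1 (hT.card_sep k)).choose

theorem sep_eq_singleton_flip (hT : IsSymmCycle T) (k : ℕ) :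
    sep (T k) (T (k + 1)) = {hT.flip k} :=
  (card_eq_one.1 (hT.card_sep k)).choose_spec

theorem apply_succ_ne_iff (hT : IsSymmCycle T) {k : ℕ} {e : Fin m} :
    T (k + 1) e ≠ T k e ↔ e = hT.flip k := by
  rw [← mem_singleton, ← hT.sep_eq_singleton_flip, sep, mem_filter, ne_comm]
  simp

theorem apply_succ_of_ne_flip (hT : IsSymmCycle T) {k : ℕ} {e : Fin m} (he : e ≠ hT.flip k) :
    T (k + 1) e = T k e :=
  not_not.1 (mt hT.apply_succ_ne_iff.1 he)

theorem apply_succ_flip (hT : IsSymmCycle T) (k : ℕ) :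
    T (k + 1) (hT.flip k) = !T k (hT.flip k) :=
  Bool.eq_not_of_ne (hT.apply_succ_ne_iff.2 rfl)

theorem flip_add (hT : IsSymmCycle T) (k : ℕ) : hT.flip (k + m) = hT.flip k := by
  refine (hT.apply_succ_ne_iff.1 ?_).symm
  rw [add_right_comm, hT.apply_add, hT.apply_add]
  simpa using hT.apply_succ_ne_iff.2 rfl

theorem flip_periodic (hT : IsSymmCycle T) : Periodic hT.flip (2 * m) := fun k => by
  rw [two_mul, ← add_assoc, hT.flip_add, hT.flip_add]

theorem apply_eq_of_forall_flip_ne (hT : IsSymmCycle T) {e : Fin m} {k n : ℕ} (hkn : k ≤ n)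
    (h : ∀ j ∈ Ico k n, hT.flip j ≠ e) : T n e = T k e := by
  induction n, hkn using Nat.le_induction with
  | base => rfl
  | succ n hkn ih =>
    rw [← ih fun j hj => h j (Ico_subset_Ico_right n.le_succ hj)]
    by_contra hne
    exact h n (mem_Ico.2 ⟨hkn, n.lt_succ_self⟩) (hT.apply_succ_ne_iff.1 hne).symm

/-- Each coordinate changes at least once in `m` consecutive steps since `T (k + m) = -T k`,
and these `m` steps flip only `m` coordinates in total. -/
theorem card_filter_flip_eq_one (hT : IsSymmCycle T) (k : ℕ) (e : Fin m) :
    #((Ico k (k + m)).filter (hT.flip · = e)) = 1 := by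
  have hpos : ∀ f ∈ (univ : Finset (Fin m)),
      1 ≤ #((Ico k (k + m)).filter (hT.flip · = f)) := by
    intro f _
    rw [Nat.one_le_iff_ne_zero, Ne, card_eq_zero, filter_eq_empty_iff]
    intro h
    have := hT.apply_eq_of_forall_flip_ne (k.le_add_right m) h
    simp [hT.apply_add] at this
  have hsum : ∑ f : Fin m, #((Ico k (k + m)).filter (hT.flip · = f)) = ∑ f : Fin m, 1 := by
    rw [← card_eq_sum_card_fiberwise (fun j _ => mem_univ (hT.flip j))]
    simp
  exact ((sum_eq_sum_iff_of_le hpos).1 hsum.symm e (mem_univ e)).symm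

theorem apply_add_flip (hT : IsSymmCycle T) (j : ℕ) {i : ℕ} (hi : i < m) :
    T (j + 1 + i) (hT.flip j) = T (j + 1) (hT.flip j) := by
  refine hT.apply_eq_of_forall_flip_ne (Nat.le_add_right _ _) fun j' hj' hflip => ?_
  rw [mem_Ico] at hj'
  have := card_le_one.1 (hT.card_filter_flip_eq_one j (hT.flip j)).le
    j' (mem_filter.2 ⟨mem_Ico.2 ⟨by omega, by omega⟩, hflip⟩)
    j (mem_filter.2 ⟨mem_Ico.2 ⟨le_rfl, by omega⟩, rfl⟩)
  omega

theorem apply_add_add_flip (hT : IsSymmCycle T) (j : ℕ) {i : ℕ} (hi : i < m) :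
    T (j + 1 + m + i) (hT.flip j) = !T (j + 1) (hT.flip j) := by
  rw [add_right_comm, hT.apply_add, hT.apply_add_flip j hi]

def up (hT : IsSymmCycle T) (k : ℕ) : Bool := T (k + 1) (hT.flip k)

theorem up_add (hT : IsSymmCycle T) (k : ℕ) : hT.up (k + m) = !hT.up k := by
  rw [up, up, hT.flip_add, add_right_comm, hT.apply_add]

/-- `peak k` says that step `k` raises and step `k + 1` lowers a coordinate: the peak vector is
`T (k + 1)`, not `T k`. -/
def peak (hT : IsSymmCycle T) (k : ℕ) : Bool := hT.up k && !hT.up (k + 1)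

theorem peak_periodic (hT : IsSymmCycle T) : Periodic hT.peak (2 * m) := fun k => by
  simp only [peak, two_mul, ← add_assoc, add_right_comm _ m 1, hT.up_add, Bool.not_not]

theorem peak_iff (hT : IsSymmCycle T) {k : ℕ} :
    hT.peak k ↔ hT.up k ∧ hT.up (k + 1) = false := by
  simp [peak]

def peaks (hT : IsSymmCycle T) : Finset ℕ := (range (2 * m)).filter (hT.peak ·)

theorem sum_peak_sub_sum_peak (hT : IsSymmCycle T) {l : ℕ} (hl : hT.up l) :
    ∑ i ∈ range m, ((hT.peak (l + i)).toNat : ℤ)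
      - ∑ i ∈ range m, ((hT.peak (l + m + i)).toNat : ℤ) = 1 := by
  have hstep : ∀ i, ((hT.peak (l + i)).toNat : ℤ) - (hT.peak (l + m + i)).toNat
      = (hT.up (l + i)).toNat - (hT.up (l + i + 1)).toNat := fun i => by
    simp only [peak, add_right_comm l m i, add_right_comm _ m 1, hT.up_add]
    cases hT.up (l + i) <;> cases hT.up (l + i + 1) <;> rfl
  rw [← sum_sub_distrib, sum_congr rfl fun i _ => hstep i]
  refine (sum_range_sub' (fun i => ((hT.up (l + i)).toNat : ℤ)) m).trans ?_
  simp [hT.up_add, hl]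

theorem sum_peaks_eq_one (hT : IsSymmCycle T) {l : ℕ} (hl : hT.up l) {g : ℕ → ℤ}
    (hg : Periodic g (2 * m)) (h₁ : ∀ i < m, hT.peak (l + i) → g (l + i) = 1)
    (h₂ : ∀ i < m, hT.peak (l + m + i) → g (l + m + i) = -1) :
    ∑ k ∈ hT.peaks, g k = 1 := by
  have hF : Periodic (fun k => if hT.peak k then g k else 0) (2 * m) := fun k => by
    simp only [hT.peak_periodic k, hg k]
  rw [peaks, sum_filter, ← hF.sum_range_add l, two_mul, sum_range_add,
    ← hT.sum_peak_sub_sum_peak hl, sub_eq_add_neg, ← sum_neg_distrib]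
  congr 1 <;> refine sum_congr rfl fun i hi => ?_ <;> rw [mem_range] at hi
  · by_cases h : hT.peak (l + i) <;> simp [h, h₁ i hi]
  · rw [← add_assoc]
    by_cases h : hT.peak (l + m + i) <;> simp [h, h₂ i hi]

theorem exists_up_flip_eq (hT : IsSymmCycle T) (e : Fin m) : ∃ l, hT.up l ∧ hT.flip l = e := by
  obtain ⟨j, hj⟩ := card_pos.1 ((hT.card_filter_flip_eq_one 0 e).symm ▸ one_pos)
  rw [mem_filter] at hj
  cases h : hT.up j
  · exact ⟨j + m, by simp [hT.up_add, h], by rw [hT.flip_add, hj.2]⟩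
  · exact ⟨j, h, hj.2⟩

theorem sum_peaks_signVal_apply (hT : IsSymmCycle T) (e : Fin m) :
    ∑ k ∈ hT.peaks, signVal (T (k + 1)) e = 1 := by
  obtain ⟨l, hl, rfl⟩ := hT.exists_up_flip_eq e
  have hl' : T (l + 1) (hT.flip l) = true := hl
  refine hT.sum_peaks_eq_one hl (g := fun k => signVal (T (k + 1)) (hT.flip l))
    (fun k => by simp only [add_right_comm k, hT.periodic _]) (fun i hi _ => ?_)
    fun i hi _ => ?_
  · simp [signVal, add_right_comm l i, hT.apply_add_flip l hi, hl']
  · rw [show l + m + i + 1 = l + 1 + m + i by ring]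
    simp [signVal, hT.apply_add_add_flip l hi, hl']

theorem sum_peaks_signVal_flip (hT : IsSymmCycle T) {d : ℕ} (hd : hT.peak d) :
    ∑ k ∈ hT.peaks, signVal (T (d + 1)) (hT.flip (k + 1)) = 1 := by
  refine hT.sum_peaks_eq_one (hT.peak_iff.1 hd).1
    (g := fun k => signVal (T (d + 1)) (hT.flip (k + 1)))
    (fun k => by simp only [add_right_comm k, hT.flip_periodic _]) (fun i hi hp => ?_)
    fun i hi hp => ?_
  · have hdown : T (d + i + 1 + 1) (hT.flip (d + i + 1)) = false := (hT.peak_iff.1 hp).2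
    have : T (d + 1) (hT.flip (d + i + 1)) = true := by
      rw [← hT.periodic (d + 1), show d + 1 + 2 * m = d + i + 1 + 1 + m + (m - 1 - i) by omega,
        hT.apply_add_add_flip _ (by omega), hdown, Bool.not_false]
    simp [signVal, this]
  · have hdown : T (d + m + i + 1 + 1) (hT.flip (d + m + i + 1)) = false :=
      (hT.peak_iff.1 hp).2
    have : T (d + 1) (hT.flip (d + m + i + 1)) = false := by
      rw [← hT.periodic (d + 1), show d + 1 + 2 * m = d + m + i + 1 + 1 + (m - 1 - i) by omega,
        hT.apply_add_flip _ (by omega), hdown]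
    simp [signVal, this]

/-- A peak vector has a `+` where any other vector of the cycle has a `-`: the coordinate
dropped right after it if the other vector comes within `m` steps, and the coordinate raised
right before it otherwise. -/
theorem exists_apply_eq_true_and_eq_false (hT : IsSymmCycle T) {k n : ℕ} (hk : hT.peak k)
    (hn₀ : 0 < n) (hn : n < 2 * m) : ∃ e, T (k + 1) e = true ∧ T (k + 1 + n) e = false := by
  obtain ⟨hup, hdown⟩ := hT.peak_iff.1 hk
  have hup' : T (k + 1) (hT.flip k) = true := hup
  have hdown' : T (k + 1 + 1) (hT.flip (k + 1)) = false := hdown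
  rcases le_or_gt n m with hnm | hnm
  · refine ⟨hT.flip (k + 1), ?_, ?_⟩
    · simpa [hdown'] using (hT.apply_succ_flip (k + 1)).symm
    · rw [show k + 1 + n = k + 1 + 1 + (n - 1) by omega, hT.apply_add_flip _ (by omega), hdown']
  · refine ⟨hT.flip k, hup', ?_⟩
    rw [show k + 1 + n = k + 1 + m + (n - m) by omega, hT.apply_add_add_flip _ (by omega), hup',
      Bool.not_true]

theorem injOn_peaks (hT : IsSymmCycle T) : Set.InjOn (fun k => T (k + 1)) hT.peaks := by
  have key : ∀ i ∈ hT.peaks, ∀ j ∈ hT.peaks, i < j → T (i + 1) ≠ T (j + 1) := by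
    intro i hi j hj hij heq
    simp only [peaks, mem_filter, mem_range] at hi hj
    obtain ⟨e, he₁, he₂⟩ :=
      hT.exists_apply_eq_true_and_eq_false hi.2 (n := j - i) (by omega) (by omega)
    rw [show i + 1 + (j - i) = j + 1 by omega, ← heq, he₁] at he₂
    exact Bool.noConfusion he₂
  intro i hi j hj hij
  rcases lt_trichotomy i j with h | h | h
  · exact absurd hij (key i hi j hj h)
  · exact h
  · exact absurd hij.symm (key j hj i hi h)

theorem posPart_ssubset_of_up (hT : IsSymmCycle T) {k : ℕ} (h : hT.up k) :
    _root_.posPart (T k) ⊂ _root_.posPart (T (k + 1)) := by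
  have h' : T (k + 1) (hT.flip k) = true := h
  have hflip : T k (hT.flip k) = false := by simpa [h'] using hT.apply_succ_flip k
  refine posPart_ssubset_posPart (fun e he => ?_) hflip h'
  rw [hT.apply_succ_of_ne_flip fun hef => by simp [hef, hflip] at he, he]

theorem posPart_succ_ssubset_of_not_up (hT : IsSymmCycle T) {k : ℕ} (h : hT.up k = false) :
    _root_.posPart (T (k + 1)) ⊂ _root_.posPart (T k) := by
  have h' : T (k + 1) (hT.flip k) = false := h
  have hflip : T k (hT.flip k) = true := by simpa [h'] using hT.apply_succ_flip k
  refine posPart_ssubset_posPart (fun e he => ?_) h' hflip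
  rwa [← hT.apply_succ_of_ne_flip fun hef => by simp [hef, h'] at he]

theorem peak_of_forall_not_ssubset (hT : IsSymmCycle T) {k : ℕ}
    (h : ∀ j, ¬ _root_.posPart (T (k + 1)) ⊂ _root_.posPart (T j)) : hT.peak k := by
  rw [peak_iff]
  constructor
  · by_contra hk
    exact h k (hT.posPart_succ_ssubset_of_not_up (Bool.eq_false_iff.2 hk))
  · by_contra hk
    exact h (k + 2) (hT.posPart_ssubset_of_up (by simpa using hk))

theorem not_posPart_ssubset_of_peak (hT : IsSymmCycle T) {k j : ℕ} (hk : hT.peak k)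
    (hk₂ : k < 2 * m) (hj : j < 2 * m) :
    ¬ _root_.posPart (T (k + 1)) ⊂ _root_.posPart (T j) := by
  intro hss
  obtain ⟨n, hn, hTn⟩ : ∃ n < 2 * m, T (k + 1 + n) = T j := by
    rcases le_or_gt (k + 1) j with h | h
    · exact ⟨j - (k + 1), by omega, by rw [show k + 1 + (j - (k + 1)) = j by omega]⟩
    · exact ⟨j + 2 * m - (k + 1), by omega,
        by rw [show k + 1 + (j + 2 * m - (k + 1)) = j + 2 * m by omega, hT.periodic]⟩
  rcases Nat.eq_zero_or_pos n with rfl | hn₀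
  · rw [add_zero] at hTn
    exact hss.ne (by rw [hTn])
  · obtain ⟨e, he₁, he₂⟩ := hT.exists_apply_eq_true_and_eq_false hk hn₀ hn
    have := hss.subset (by simpa [_root_.posPart] using he₁)
    simp [_root_.posPart, ← hTn, he₂] at this

theorem maxPlus_eq_image (hT : IsSymmCycle T) :
    maxPlus ((range (2 * m)).image T) = hT.peaks.image (fun k => T (k + 1)) := by
  ext X
  simp only [maxPlus, peaks, mem_filter, mem_image, mem_range]
  constructor
  · rintro ⟨⟨n, hn, rfl⟩, hmax⟩
    obtain ⟨k, hk, hTk⟩ : ∃ k < 2 * m, T (k + 1) = T n := by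
      rcases n with _ | n
      · refine ⟨2 * m - 1, by omega, ?_⟩
        rw [show 2 * m - 1 + 1 = 0 + 2 * m by omega, hT.periodic]
      · exact ⟨n, by omega, rfl⟩
    refine ⟨k, ⟨hk, hT.peak_of_forall_not_ssubset fun j => ?_⟩, hTk⟩
    rw [hTk, ← hT.periodic.map_mod_nat j]
    exact hmax _ ⟨j % (2 * m), Nat.mod_lt _ (by omega), rfl⟩
  · rintro ⟨k, ⟨hk, hpk⟩, rfl⟩
    refine ⟨⟨(k + 1) % (2 * m), Nat.mod_lt _ (by omega), hT.periodic.map_mod_nat _⟩, ?_⟩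
    rintro _ ⟨j, hj, rfl⟩
    exact hT.not_posPart_ssubset_of_peak hpk hk hj

end

end IsSymmCycle

end

theorem stmt_11_general {m : ℕ} (T : ℕ → SV m)
    (hsym : ∀ k, T (k + m) = fun e => ! T k e)
    (hstep : ∀ k, (sep (T k) (T (k + 1))).card = 1) :
    isCommitteeB (maxPlus ((Finset.range (2 * m)).image T)) ∧
      ∀ Q ⊂ maxPlus ((Finset.range (2 * m)).image T), ¬ isCommitteeB Q := by
  have hT : IsSymmCycle T := ⟨hsym, hstep⟩
  have hsum : ∀ e, ∑ X ∈ hT.peaks.image (fun k => T (k + 1)), signVal X e = 1 := fun e => by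
    rw [sum_image hT.injOn_peaks, hT.sum_peaks_signVal_apply e]
  rw [hT.maxPlus_eq_image]
  refine ⟨isCommitteeB_iff_forall_sum_signVal_pos.2 fun e => by simp [hsum e],
    fun Q hQ => not_isCommitteeB_of_ssubset (fun e => (hsum e).le) hT.peaks
      (fun k => hT.flip (k + 1)) ?_ hQ⟩
  rintro _ hX
  obtain ⟨d, hd, rfl⟩ := mem_image.1 hX
  rw [hT.sum_peaks_signVal_flip (mem_filter.1 hd).2]
  exact one_pos

theorem stmt_11 {m : ℕ} (hm : 0 < m) (T : ℕ → SV m)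
    (hsym : ∀ k, T (k + m) = fun e => ! T k e)
    (hstep : ∀ k, (sep (T k) (T (k + 1))).card = 1)
    (hplus : ∀ k < 2 * m, T k ≠ fun _ => true) :
    isCommitteeB (maxPlus ((Finset.range (2 * m)).image T)) ∧
      ∀ Q ⊂ maxPlus ((Finset.range (2 * m)).image T), ¬ isCommitteeB Q :=
  stmt_11_general T hsym hstep
end
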